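/- arXiv:1410.6839 — 10 statements merged into one kernel-verified Lean document; each statement's English description precedes it below -/
import Mathlib

section
/- If H is an H-subgroup of a finite group G and H is subnormal in G, then H is normal in G. -/
def IsHSubgroup {G : Type*} [Group G] (H : Subgroup G) : Prop :=
  ∀ g : G, Subgroup.map (MulAut.conj g).toMonoidHom H ⊓ Subgroup.normalizer (H : Set G) ≤ H

/-- A subgroup is subnormal if there is a chain from it to the whole group in which
each term is normal in the next. -/
def IsSubnormal {G : Type*} [Group G] (H : Subgroup G) : Prop :=
  ∃ (n : ℕ) (s : Fin (n + 1) → Subgroup G), s 0 = H ∧ s (Fin.last n) = ⊤ ∧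
    ∀ i : Fin n, s i.castSucc ≤ s i.succ ∧ ((s i.castSucc).subgroupOf (s i.succ)).Normal

/-!
Along a subnormal chain `H = H₀ ⊴ H₁ ⊴ ⋯ ⊴ Hₙ = G` every `Hᵢ` lies in `N_G(H)`. Indeed, if
`H ≤ Hᵢ ≤ N_G(H)` and `g ∈ Hᵢ₊₁`, then `H^g ≤ Hᵢ^g = Hᵢ ≤ N_G(H)`, so the H-subgroup property
gives `H^g ≤ H`; applying this to `g` and `g⁻¹` shows `g ∈ N_G(H)`. Hence `N_G(H) = G`.
-/

namespace IsHSubgroup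

variable {G : Type*} [Group G] {H : Subgroup G}

theorem conj_mem (hH : IsHSubgroup H) {g h : G} (hh : h ∈ H)
    (hn : g * h * g⁻¹ ∈ Subgroup.normalizer (H : Set G)) : g * h * g⁻¹ ∈ H :=
  hH g ⟨⟨h, hh, rfl⟩, hn⟩

theorem le_normalizer_of_normal_subgroupOf (hH : IsHSubgroup H) {K L : Subgroup G}
    (hHK : H ≤ K) (hKN : K ≤ Subgroup.normalizer (H : Set G)) (hKL : K ≤ L)
    (hK : (K.subgroupOf L).Normal) : L ≤ Subgroup.normalizer (H : Set G) := by
  have hconj : ∀ g ∈ L, ∀ h ∈ H, g * h * g⁻¹ ∈ H := fun g hg h hh =>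
    hH.conj_mem hh (hKN ((Subgroup.normal_subgroupOf_iff hKL).1 hK h g (hHK hh) hg))
  intro g hg
  rw [Subgroup.mem_normalizer_iff]
  refine fun h => ⟨hconj g hg h, fun hc => ?_⟩
  simpa [mul_assoc] using hconj g⁻¹ (L.inv_mem hg) _ hc

end IsHSubgroup

theorem hSubgroup_subnormal_normal_general {G : Type*} [Group G] (H : Subgroup G)
    (hH : IsHSubgroup H) (hsn : IsSubnormal H) : H.Normal := by
  obtain ⟨n, s, h0, hlast, hstep⟩ := hsn
  have hchain : ∀ i, H ≤ s i ∧ s i ≤ Subgroup.normalizer (H : Set G) := by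
    intro i
    induction i using Fin.induction with
    | zero => exact ⟨h0.ge, h0.le.trans Subgroup.le_normalizer⟩
    | succ i ih =>
      obtain ⟨hHs, hsN⟩ := ih
      exact ⟨hHs.trans (hstep i).1,
        hH.le_normalizer_of_normal_subgroupOf hHs hsN (hstep i).1 (hstep i).2⟩
  rw [← Subgroup.normalizer_eq_top_iff, ← top_le_iff, ← hlast]
  exact (hchain (Fin.last n)).2

theorem hSubgroup_subnormal_normal {G : Type*} [Group G] [Finite G] (H : Subgroup G)
    (hH : IsHSubgroup H) (hsn : IsSubnormal H) : H.Normal :=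
  hSubgroup_subnormal_normal_general H hH hsn
end

section
/- If H is an H-subgroup of a finite group G and H ≤ K ≤ G, then H is an H-subgroup of K. -/
namespace Subgroup

variable {G : Type*} [Group G]

theorem map_conj_subgroupOf (H K : Subgroup G) (k : K) :
    (H.subgroupOf K).map (MulAut.conj k).toMonoidHom =
      (H.map (MulAut.conj (k : G)).toMonoidHom).subgroupOf K := by
  ext x
  simp only [mem_map, mem_subgroupOf, MulEquiv.coe_toMonoidHom, MulAut.conj_apply]
  constructor
  · rintro ⟨h, hh, rfl⟩
    exact ⟨h, hh, rfl⟩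
  · rintro ⟨h, hh, hx⟩
    refine ⟨k⁻¹ * x * k, ?_, by group⟩
    simp [← hx, mul_assoc, hh]

end Subgroup

theorem hSubgroup_of_le_general {G : Type*} [Group G] (H K : Subgroup G)
    (hHK : H ≤ K) (hH : IsHSubgroup H) : IsHSubgroup (H.subgroupOf K) := by
  intro k
  rw [Subgroup.map_conj_subgroupOf, ← Subgroup.subgroupOf_normalizer_eq hHK]
  exact fun x hx ↦ hH k hx

theorem hSubgroup_of_le {G : Type*} [Group G] [Finite G] (H K : Subgroup G)
    (hHK : H ≤ K) (hH : IsHSubgroup H) : IsHSubgroup (H.subgroupOf K) :=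
  hSubgroup_of_le_general H K hHK hH
end

section
/- Let G be a finite group, N a normal subgroup of G, and H a subgroup of G with N ≤ H. Then H is an H-subgroup of G if and only if H/N is an H-subgroup of G/N. -/
/-!
Pulling back along a surjection `f` is an order embedding of subgroup lattices, and when
`ker f ≤ H` it carries `H.map f`, its conjugates and its normalizer back to `H`, the
corresponding conjugates of `H` and the normalizer of `H`: the kernel, being normal, lies in
every conjugate of `H`.
-/

namespace Subgroup

variable {G Q : Type*} [Group G] [Group Q]

theorem map_map_conj_comm (f : G →* Q) (g : G) (H : Subgroup G) :
    (H.map f).map (MulAut.conj (f g)).toMonoidHom = (H.map (MulAut.conj g).toMonoidHom).map f := by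
  rw [map_map, map_map]
  congr 1
  ext x
  simp

theorem comap_map_conj_map_eq {f : G →* Q} {H : Subgroup G} (hker : f.ker ≤ H) (g : G) :
    ((H.map f).map (MulAut.conj (f g)).toMonoidHom).comap f = H.map (MulAut.conj g).toMonoidHom := by
  rw [map_map_conj_comm, comap_map_eq_self]
  calc f.ker = f.ker.map (MulAut.conj g).toMonoidHom := (Normal.map_conj_eq f.ker g).symm
    _ ≤ H.map (MulAut.conj g).toMonoidHom := map_mono hker

theorem isHSubgroup_map_iff {f : G →* Q} (hf : Function.Surjective f) {H : Subgroup G}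
    (hker : f.ker ≤ H) : IsHSubgroup (H.map f) ↔ IsHSubgroup H := by
  refine hf.forall.trans (forall_congr' fun g ↦ ?_)
  rw [← comap_le_comap_of_surjective hf, comap_inf, comap_map_conj_map_eq hker,
    comap_normalizer_eq_of_surjective _ hf, comap_map_eq_self hker]

end Subgroup

theorem hSubgroup_quotient_iff_general {G : Type*} [Group G] (N H : Subgroup G)
    [N.Normal] (hNH : N ≤ H) :
    IsHSubgroup H ↔ IsHSubgroup (H.map (QuotientGroup.mk' N)) :=
  (Subgroup.isHSubgroup_map_iff (QuotientGroup.mk'_surjective N)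
    ((QuotientGroup.ker_mk' N).trans_le hNH)).symm

theorem hSubgroup_quotient_iff {G : Type*} [Group G] [Finite G] (N H : Subgroup G)
    [N.Normal] (hNH : N ≤ H) :
    IsHSubgroup H ↔ IsHSubgroup (H.map (QuotientGroup.mk' N)) :=
  hSubgroup_quotient_iff_general N H hNH
end

section
/- Let G be a finite group, H a subgroup of G, and N a normal subgroup of G with N ≤ N_G(H). If H is an H-subgroup of G, then N_G(HN) = N_G(H) and HN is an H-subgroup of G. -/
/-!
If `g` normalizes `HN`, then `H^g ≤ HN ≤ N_G(H)`, so the H-subgroup property gives `H^g ≤ H`,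
and `H^g = H` because the two have the same order. For the second claim, an element of
`(HN)^g ∩ N_G(HN) = H^g N ∩ N_G(H)` is `y n` with `n ∈ N ≤ N_G(H)`, so `y ∈ H^g ∩ N_G(H) ≤ H`.
-/

open Subgroup

namespace IsHSubgroup

variable {G : Type*} [Group G] {H N : Subgroup G}

theorem mem_normalizer_of_map_conj_le [Finite H] (hH : IsHSubgroup H) {g : G}
    (hg : H.map (MulAut.conj g).toMonoidHom ≤ normalizer (H : Set G)) :
    g ∈ normalizer (H : Set G) := by
  have hle : H.map (MulAut.conj g).toMonoidHom ≤ H := fun x hx => hH g ⟨hx, hg hx⟩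
  have hcard : Nat.card H ≤ Nat.card (H.map (MulAut.conj g).toMonoidHom) :=
    (card_map_of_injective (MulAut.conj g).injective).ge
  exact mem_normalizer_iff_map_conj_eq.mpr (eq_of_le_of_card_ge hle hcard)

theorem normalizer_sup_normal_eq [Finite H] [N.Normal] (hH : IsHSubgroup H)
    (hN : N ≤ normalizer (H : Set G)) :
    normalizer ((H ⊔ N : Subgroup G) : Set G) = normalizer (H : Set G) := by
  refine le_antisymm (fun g hg => hH.mem_normalizer_of_map_conj_le ?_)
    normalizer_le_normalizer_sup_normal
  calc H.map (MulAut.conj g).toMonoidHom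
      ≤ (H ⊔ N).map (MulAut.conj g).toMonoidHom := map_mono le_sup_left
    _ = H ⊔ N := mem_normalizer_iff_map_conj_eq.mp hg
    _ ≤ normalizer (H : Set G) := sup_le le_normalizer hN

theorem sup_normal [Finite H] [N.Normal] (hH : IsHSubgroup H)
    (hN : N ≤ normalizer (H : Set G)) : IsHSubgroup (H ⊔ N) := by
  intro g x hx
  obtain ⟨hxg, hxN⟩ := mem_inf.mp hx
  have hNg : N.map (MulAut.conj g).toMonoidHom = N := Normal.map_conj_eq N g
  rw [Subgroup.map_sup, hNg] at hxg
  rw [hH.normalizer_sup_normal_eq hN] at hxN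
  obtain ⟨y, hy, n, hn, rfl⟩ := mem_sup_of_normal_right.mp hxg
  have hyN : y ∈ normalizer (H : Set G) := by
    simpa only [mul_inv_cancel_right] using mul_mem hxN (inv_mem (hN hn))
  exact mul_mem (mem_sup_left (hH g ⟨hy, hyN⟩)) (mem_sup_right hn)

end IsHSubgroup

theorem hSubgroup_join_normal {G : Type*} [Group G] [Finite G] (H N : Subgroup G)
    [N.Normal] (hNn : N ≤ Subgroup.normalizer (H : Set G)) (hH : IsHSubgroup H) :
    Subgroup.normalizer ((H ⊔ N : Subgroup G) : Set G) = Subgroup.normalizer (H : Set G) ∧ IsHSubgroup (H ⊔ N) :=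
  ⟨hH.normalizer_sup_normal_eq hNn, hH.sup_normal hNn⟩
end

section
/- Let G be a finite group, p a prime, H a p-subgroup of G, and N a normal subgroup of G with p not dividing |N|. If H is an HC-subgroup of G, then HN is an HC-subgroup of G and HN/N is an HC-subgroup of G/N. -/
def IsHCSubgroup {G : Type*} [Group G] (H : Subgroup G) : Prop :=
  ∃ T : Subgroup G, T.Normal ∧ H ⊔ T = ⊤ ∧
    ∀ g : G, Subgroup.map (MulAut.conj g).toMonoidHom H ⊓ (T ⊓ Subgroup.normalizer (H : Set G)) ≤ H

/-!
Let `T` witness that `H` is an HC-subgroup. As `G ⧸ T` is an image of the `p`-group `H`, the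
`p'`-group `N` lies in `T`, so `T` also supplements `HN`. Take `y = hn` in `(HN)^g ∩ T ∩ N_G(HN)`
with `h ∈ H^g` and `n ∈ N`. Then `h` is a `p`-element of `T` normalizing `HN`, in which `H` is a
Sylow `p`-subgroup. The number of Sylow `p`-subgroups of `HN` is prime to `p`, so `⟨h⟩` fixes one
of them: `h` normalizes `H^k` for some `k ∈ HN`. The HC condition for `H^k` gives `h ∈ H^k ≤ HN`.
The quotient statement holds because HC-subgroups containing the kernel pass to surjective images.
-/

open Subgroup Pointwise

section

variable {G : Type*} [Group G]

theorem map_subtype_smul_of_mem_normalizer {K : Subgroup G} (g : normalizer (K : Set G))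
    (S : Subgroup K) : (g • S).map K.subtype = MulAut.conj (g : G) • S.map K.subtype := by
  ext x
  simp only [mem_map, mem_smul_pointwise_iff_exists]
  constructor
  · rintro ⟨_, ⟨s, hs, rfl⟩, rfl⟩
    exact ⟨s, ⟨s, hs, rfl⟩, rfl⟩
  · rintro ⟨_, ⟨s, hs, rfl⟩, rfl⟩
    exact ⟨g • s, ⟨s, hs, rfl⟩, rfl⟩

theorem map_subtype_conj_smul {K : Subgroup G} (k : K) (S : Subgroup K) :
    (MulAut.conj k • S).map K.subtype = MulAut.conj (k : G) • S.map K.subtype :=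
  map_subtype_smul_of_mem_normalizer (K := K) ⟨(k : G), le_normalizer k.2⟩ S

theorem map_conj_smul {G' : Type*} [Group G'] (f : G →* G') (g : G) (K : Subgroup G) :
    (MulAut.conj g • K).map f = MulAut.conj (f g) • K.map f := by
  ext x
  simp only [mem_map, mem_smul_pointwise_iff_exists]
  constructor
  · rintro ⟨_, ⟨k, hk, rfl⟩, rfl⟩
    exact ⟨f k, ⟨k, hk, rfl⟩, by simp⟩
  · rintro ⟨_, ⟨k, hk, rfl⟩, rfl⟩
    exact ⟨MulAut.conj g • k, ⟨k, hk, rfl⟩, by simp⟩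

theorem exists_conj_smul_le_normalizer {p : ℕ} [Fact p.Prime] [Finite G] {H K Q : Subgroup G}
    (hHK : H ≤ K) (hH : IsPGroup p H) (hindex : ¬ p ∣ H.relIndex K) (hQ : IsPGroup p Q)
    (hQK : Q ≤ normalizer (K : Set G)) :
    ∃ k ∈ K, Q ≤ normalizer (MulAut.conj k • H : Subgroup G) := by
  let SH : Sylow p K := hH.comap_subtype.toSylow hindex
  have hQ' : IsPGroup p (Q.subgroupOf (normalizer (K : Set G))) := hQ.comap_subtype
  obtain ⟨R, hR⟩ := hQ'.nonempty_fixed_point_of_prime_not_dvd_card (Sylow p K)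
    (not_dvd_card_sylow p K)
  obtain ⟨k, hk⟩ := MulAction.exists_smul_eq K R SH
  have hRH : (R : Subgroup K).map K.subtype = MulAut.conj (k⁻¹ : G) • H := by
    have : MulAut.conj (k : G) • (R : Subgroup K).map K.subtype = H := by
      rw [← map_subtype_conj_smul, ← Sylow.coe_subgroup_smul, hk]
      simp [SH, hHK]
    rw [← this, map_inv, inv_smul_smul]
  refine ⟨k⁻¹, K.inv_mem k.2, fun q hq => ?_⟩
  have hfix : (⟨q, hQK hq⟩ : normalizer (K : Set G)) • (R : Subgroup K) = R :=
    congrArg Sylow.toSubgroup (hR ⟨⟨q, hQK hq⟩, hq⟩)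
  rw [← hRH, mem_normalizer_iff_map_conj_eq]
  exact (map_subtype_smul_of_mem_normalizer _ _).symm.trans (by rw [hfix])

theorem relIndex_sup_eq_inf_relIndex [Finite G] (H N : Subgroup G) [N.Normal] :
    H.relIndex (H ⊔ N) = (H ⊓ N).relIndex N := by
  have h1 := relIndex_mul_relIndex (H ⊓ N) H (H ⊔ N) inf_le_left le_sup_left
  have h2 := relIndex_mul_relIndex (H ⊓ N) N (H ⊔ N) inf_le_right le_sup_right
  rw [inf_relIndex_left] at h1
  rw [relIndex_sup_right, ← h1, mul_comm] at h2
  exact (Nat.eq_of_mul_eq_mul_left (Nat.pos_of_ne_zero FiniteIndex.index_ne_zero) h2).symm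

theorem IsPGroup.quotient_of_sup_eq_top {p : ℕ} {H T : Subgroup G} [T.Normal] (hH : IsPGroup p H)
    (hHT : H ⊔ T = ⊤) : IsPGroup p (G ⧸ T) := by
  refine hH.of_surjective ((QuotientGroup.mk' T).comp H.subtype) ?_
  rintro ⟨g⟩
  obtain ⟨h, hh, t, ht, rfl⟩ := mem_sup_of_normal_right.mp (hHT ▸ mem_top g)
  exact ⟨⟨h, hh⟩, QuotientGroup.eq.mpr (by simpa using ht)⟩

theorem le_of_isPGroup_quotient_of_coprime {p : ℕ} {N T : Subgroup G} [T.Normal]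
    (hT : IsPGroup p (G ⧸ T)) (hN : p.Coprime (Nat.card N)) : N ≤ T := by
  intro n hn
  have hdvd : orderOf (n : G ⧸ T) ∣ Nat.card N :=
    (orderOf_map_dvd (QuotientGroup.mk' T) n).trans (N.orderOf_dvd_natCard hn)
  have h1 := (hT.orderOf_coprime hN _).eq_one_of_dvd hdvd
  rwa [orderOf_eq_one_iff, QuotientGroup.eq_one_iff] at h1

def HCCondition (H T : Subgroup G) : Prop :=
  ∀ g : G, MulAut.conj g • H ⊓ (T ⊓ normalizer (H : Set G)) ≤ H

theorem isHCSubgroup_iff {H : Subgroup G} :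
    IsHCSubgroup H ↔ ∃ T : Subgroup G, T.Normal ∧ H ⊔ T = ⊤ ∧ HCCondition H T :=
  Iff.rfl

theorem HCCondition.conj_smul {H T : Subgroup G} [T.Normal] (hc : HCCondition H T) (a : G) :
    HCCondition (MulAut.conj a • H) T := by
  intro g
  have hnorm :
      normalizer (MulAut.conj a • H : Subgroup G) = MulAut.conj a • normalizer (H : Set G) :=
    (map_equiv_normalizer_eq H (MulAut.conj a)).symm
  calc MulAut.conj g • MulAut.conj a • H ⊓ (T ⊓ normalizer (MulAut.conj a • H : Subgroup G))
      = MulAut.conj a • (MulAut.conj (a⁻¹ * g * a) • H ⊓ (T ⊓ normalizer (H : Set G))) := by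
        rw [smul_inf, smul_inf, hnorm, Normal.conj_smul_eq_self a T, smul_smul, smul_smul,
          ← map_mul, ← map_mul, mul_assoc, mul_inv_cancel_left]
    _ ≤ MulAut.conj a • H := pointwise_smul_le_pointwise_smul_iff.mpr (hc _)

theorem HCCondition.sup_of_coprime {p : ℕ} [Fact p.Prime] [Finite G] {H N T : Subgroup G}
    [N.Normal] [T.Normal] (hc : HCCondition H T) (hHp : IsPGroup p H) (hpN : ¬ p ∣ Nat.card N)
    (hNT : N ≤ T) : HCCondition (H ⊔ N) T := by
  intro g y hy
  obtain ⟨hyK, hyT, hyN⟩ := mem_inf.mp hy |>.imp_right mem_inf.mp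
  rw [smul_sup, Normal.conj_smul_eq_self g N] at hyK
  obtain ⟨h, hh, n, hn, rfl⟩ := mem_sup_of_normal_right.mp hyK
  have hnK : n ∈ normalizer (H ⊔ N : Subgroup G) := le_normalizer (mem_sup_right hn)
  have hhT : h ∈ T := by simpa using T.mul_mem hyT (T.inv_mem (hNT hn))
  have hhK : h ∈ normalizer (H ⊔ N : Subgroup G) := by simpa using mul_mem hyN (inv_mem hnK)
  have hhp : IsPGroup p (zpowers h) := (hHp.map _).to_le (zpowers_le.mpr hh)
  have hindex : ¬ p ∣ H.relIndex (H ⊔ N) := by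
    rw [relIndex_sup_eq_inf_relIndex]
    exact fun hdvd => hpN (hdvd.trans (relIndex_dvd_card _ _))
  obtain ⟨k, hk, hkN⟩ :=
    exists_conj_smul_le_normalizer le_sup_left hHp hindex hhp (zpowers_le.mpr hhK)
  have hhH : h ∈ MulAut.conj k • H := hc.conj_smul k (g * k⁻¹)
    ⟨by rwa [smul_smul, ← map_mul, inv_mul_cancel_right], hhT, hkN (mem_zpowers h)⟩
  exact mul_mem (conj_smul_le_of_le le_sup_left ⟨k, hk⟩ hhH) (mem_sup_right hn)

theorem IsHCSubgroup.map_of_surjective {G' : Type*} [Group G'] {K : Subgroup G}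
    (hK : IsHCSubgroup K) {f : G →* G'} (hf : Function.Surjective f) (hker : f.ker ≤ K) :
    IsHCSubgroup (K.map f) := by
  obtain ⟨T, hTn, hsup, hc⟩ := isHCSubgroup_iff.mp hK
  refine isHCSubgroup_iff.mpr ⟨T.map f, hTn.map f hf, ?_, ?_⟩
  · rw [← Subgroup.map_sup, hsup, map_top_of_surjective f hf]
  intro g' y hy
  obtain ⟨g, rfl⟩ := hf g'
  obtain ⟨hyK, ⟨t, ht, rfl⟩, hyN⟩ := mem_inf.mp hy |>.imp_right mem_inf.mp
  have htK : t ∈ MulAut.conj g • K := by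
    have hker' : f.ker ≤ MulAut.conj g • K := by
      rw [← f.normal_ker.conj_smul_eq_self g]
      exact pointwise_smul_le_pointwise_smul_iff.mpr hker
    rw [← map_conj_smul] at hyK
    rwa [← mem_comap, comap_map_eq, sup_of_le_left hker'] at hyK
  have htN : t ∈ normalizer (K : Set G) := by
    have := le_normalizer_comap f hyN
    rwa [comap_map_eq, sup_of_le_left hker] at this
  exact mem_map_of_mem f (hc g ⟨htK, ht, htN⟩)

end

theorem hcSubgroup_join_coprime {G : Type*} [Group G] [Finite G] (p : ℕ) (hp : p.Prime)
    (H N : Subgroup G) [N.Normal] (hHp : IsPGroup p H) (hpN : ¬ p ∣ Nat.card N)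
    (hH : IsHCSubgroup H) :
    IsHCSubgroup (H ⊔ N) ∧ IsHCSubgroup ((H ⊔ N).map (QuotientGroup.mk' N)) := by
  have := Fact.mk hp
  obtain ⟨T, hTn, hHT, hc⟩ := isHCSubgroup_iff.mp hH
  have hNT : N ≤ T :=
    le_of_isPGroup_quotient_of_coprime (hHp.quotient_of_sup_eq_top hHT)
      (hp.coprime_iff_not_dvd.mpr hpN)
  have hHN : IsHCSubgroup (H ⊔ N) :=
    isHCSubgroup_iff.mpr ⟨T, hTn, by rw [sup_assoc, sup_eq_right.mpr hNT, hHT],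
      hc.sup_of_coprime hHp hpN hNT⟩
  exact ⟨hHN, hHN.map_of_surjective (QuotientGroup.mk'_surjective N)
    (by rw [QuotientGroup.ker_mk']; exact le_sup_right)⟩
end

section
/- Let G be a finite group, K a normal subgroup of G, and H a normal subgroup of K. If H is an HC-subgroup of G, then H is c-normal in G. -/
/-- H is c-normal in G if there is a normal subgroup K of G with G = HK and
H ∩ K contained in the normal core of H. -/
def IsCNormal {G : Type*} [Group G] (H : Subgroup G) : Prop :=
  ∃ K : Subgroup G, K.Normal ∧ H ⊔ K = ⊤ ∧ H ⊓ K ≤ H.normalCore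

namespace Subgroup

variable {G : Type*} [Group G] {H K T : Subgroup G}

-- For `x ∈ H ∩ T`, each conjugate `x ^ g` lies in `H ^ g ∩ T ∩ K ≤ H ^ g ∩ N_T(H) ≤ H`.
theorem inf_le_normalCore_of_conj_inf_le [T.Normal] [K.Normal] (hHK : H ≤ K)
    (hKN : K ≤ normalizer (H : Set G))
    (hT : ∀ g : G, map (MulAut.conj g).toMonoidHom H ⊓ (T ⊓ normalizer (H : Set G)) ≤ H) :
    H ⊓ T ≤ H.normalCore := by
  rintro x ⟨hxH, hxT⟩ g
  exact hT g ⟨mem_map_of_mem _ hxH, ‹T.Normal›.conj_mem x hxT g,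
    hKN (‹K.Normal›.conj_mem x (hHK hxH) g)⟩

end Subgroup

theorem hcSubgroup_cNormal_general {G : Type*} [Group G] (K H : Subgroup G)
    [K.Normal] (hHK : H ≤ K) (hHnK : (H.subgroupOf K).Normal)
    (hH : IsHCSubgroup H) : IsCNormal H := by
  obtain ⟨T, hTn, hHT, hT⟩ := hH
  have hKN : K ≤ Subgroup.normalizer (H : Set G) :=
    (Subgroup.normal_subgroupOf_iff_le_normalizer hHK).mp hHnK
  exact ⟨T, hTn, hHT, Subgroup.inf_le_normalCore_of_conj_inf_le hHK hKN hT⟩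

theorem hcSubgroup_cNormal {G : Type*} [Group G] [Finite G] (K H : Subgroup G)
    [K.Normal] (hHK : H ≤ K) (hHnK : (H.subgroupOf K).Normal)
    (hH : IsHCSubgroup H) : IsCNormal H :=
  hcSubgroup_cNormal_general K H hHK hHnK hH
end

section
/- Let G be a finite group, H an HC-subgroup of G, and L a normal subgroup of G such that L/Φ(L) is a chief factor of G (i.e., L/Φ(L) is a minimal normal subgroup of G/Φ(L)). If H ≤ L, then H is an H-subgroup of G. -/
/-- The Frattini subgroup of a subgroup L of G, viewed as a subgroup of G. -/
def frattiniOf {G : Type*} [Group G] (L : Subgroup G) : Subgroup G :=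
  Subgroup.map L.subtype (⨅ M ∈ {M : Subgroup L | IsCoatom M}, M)

open scoped Pointwise

namespace Subgroup

variable {G : Type*} [Group G]

theorem sup_inf_assoc_of_le_of_normal (H T : Subgroup G) {L : Subgroup G} [T.Normal]
    (hHL : H ≤ L) : (H ⊔ T) ⊓ L = H ⊔ (T ⊓ L) := by
  refine le_antisymm (fun x hx => ?_)
    (sup_le (le_inf le_sup_left hHL) (inf_le_inf_right L le_sup_right))
  have hx' : x ∈ (H : Set G) * ((T ⊓ L : Subgroup G) : Set G) := by
    rw [mul_inf_assoc H T L hHL, ← mul_normal]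
    exact hx
  obtain ⟨h, hh, t, ht, rfl⟩ := hx'
  exact mul_mem_sup hh ht

theorem frattiniOf_eq_map_frattini (L : Subgroup G) : frattiniOf L = (frattini L).map L.subtype :=
  rfl

theorem frattiniOf_le (L : Subgroup G) : frattiniOf L ≤ L :=
  map_subtype_le _

instance frattiniOf_normal (L : Subgroup G) [L.Normal] : (frattiniOf L).Normal := by
  rw [frattiniOf_eq_map_frattini]
  infer_instance

theorem eq_of_sup_frattiniOf_eq {L K : Subgroup G} [IsCoatomic (Subgroup L)] (hK : K ≤ L)
    (h : K ⊔ frattiniOf L = L) : K = L := by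
  have hgen : K.subgroupOf L ⊔ frattini L = ⊤ := by
    apply map_injective L.subtype_injective
    rw [map_sup, subgroupOf_map_subtype, inf_of_le_left hK, ← MonoidHom.range_eq_map,
      range_subtype]
    exact h
  exact le_antisymm hK (subgroupOf_eq_top.mp (frattini_nongenerating hgen))

end Subgroup

open Subgroup

theorem isHSubgroup_of_normal {G : Type*} [Group G] {H : Subgroup G} (hH : H.Normal) :
    IsHSubgroup H := by
  rintro g x ⟨⟨y, hy, rfl⟩, -⟩
  exact hH.conj_mem y hy g

theorem isHSubgroup_of_normalizer_le {G : Type*} [Group G] {H T : Subgroup G}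
    (hT : normalizer (H : Set G) ≤ T)
    (h : ∀ g : G, map (MulAut.conj g).toMonoidHom H ⊓ (T ⊓ normalizer (H : Set G)) ≤ H) :
    IsHSubgroup H := by
  unfold IsHSubgroup
  simpa only [inf_of_le_right hT] using h

theorem hcSubgroup_of_le_chief_frattini_general {G : Type*} [Group G] [Finite G]
    (H L : Subgroup G) [L.Normal] (hH : IsHCSubgroup H) (hHL : H ≤ L)
    (hchief : ∀ X : Subgroup G, X.Normal → frattiniOf L ≤ X → X ≤ L →
      X = frattiniOf L ∨ X = L) :
    IsHSubgroup H := by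
  obtain ⟨T, hTn, hHT, hTH⟩ := hH
  have hdedekind : H ⊔ (T ⊓ L) = L := by
    rw [← sup_inf_assoc_of_le_of_normal H T hHL, hHT, top_inf_eq]
  rcases hchief ((T ⊓ L) ⊔ frattiniOf L) inferInstance le_sup_right
      (sup_le inf_le_right (frattiniOf_le L)) with hX | hX
  · have hHΦ : H ⊔ frattiniOf L = L := by
      refine le_antisymm (sup_le hHL (frattiniOf_le L)) ?_
      calc L = H ⊔ (T ⊓ L) := hdedekind.symm
        _ ≤ H ⊔ frattiniOf L := sup_le_sup_left (le_sup_left.trans hX.le) H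
    have hHeq : H = L := eq_of_sup_frattiniOf_eq hHL hHΦ
    exact isHSubgroup_of_normal (hHeq ▸ inferInstance)
  · have hLT : L ≤ T := (eq_of_sup_frattiniOf_eq inf_le_right hX).ge.trans inf_le_left
    have hT : T = ⊤ := top_le_iff.mp (hHT ▸ sup_le (hHL.trans hLT) le_rfl)
    exact isHSubgroup_of_normalizer_le (hT ▸ le_top) hTH

theorem hcSubgroup_of_le_chief_frattini {G : Type*} [Group G] [Finite G]
    (H L : Subgroup G) [L.Normal] (hH : IsHCSubgroup H) (hHL : H ≤ L)
    (hphiN : (frattiniOf L).Normal) (hlt : frattiniOf L < L)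
    (hchief : ∀ X : Subgroup G, X.Normal → frattiniOf L ≤ X → X ≤ L →
      X = frattiniOf L ∨ X = L) :
    IsHSubgroup H :=
  hcSubgroup_of_le_chief_frattini_general H L hH hHL hchief
end

section
/- Let G be a finite group, P a normal p-subgroup of G contained in the hypercenter Z_∞(G). Then O^p(G) ≤ C_G(P), i.e., the subgroup generated by all p'-elements of G centralizes P. -/
/-- The hypercenter of a group: the terminal member of the upper central series. -/
def hypercenter (G : Type*) [Group G] : Subgroup G :=
  ⨆ n : ℕ, upperCentralSeries G n

/-!
Fix a `p'`-element `x` and show by induction on `n` that `x` commutes with every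
`g ∈ P ∩ Z_n(G)`. The commutator `c = ⁅x, g⁆` lies in `P ∩ Z_{n-1}(G)`, so `x` commutes
with `c` by induction, and then `⁅x ^ k, g⁆ = c ^ k` for all `k`. Taking `k = orderOf x`
gives `c ^ k = 1` with `k` prime to `p`, which forces the `p`-element `c` to be trivial.
-/

section

open scoped commutatorElement

variable {G : Type*} [Group G]

theorem commutatorElement_pow_left_of_commute {x g : G} (h : Commute x ⁅x, g⁆) (n : ℕ) :
    ⁅x ^ n, g⁆ = ⁅x, g⁆ ^ n := by
  induction n with
  | zero => simp only [pow_zero, commutatorElement_one_left]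
  | succ n ih =>
    rw [pow_succ', commutatorElement_mul_left_eq_conj_mul, ih, (h.pow_right n).eq,
      mul_inv_cancel_right, pow_succ]

theorem IsPGroup.eq_one_of_pow_eq_one {p : ℕ} {P : Subgroup G} (hP : IsPGroup p P) {c : G}
    (hc : c ∈ P) {n : ℕ} (hn : n.Coprime p) (hcn : c ^ n = 1) : c = 1 := by
  have hcop : (orderOf c).Coprime n := by
    simpa only [Subgroup.orderOf_mk] using hP.orderOf_coprime hn.symm ⟨c, hc⟩
  exact orderOf_eq_one_iff.mp (hcop.eq_one_of_dvd (orderOf_dvd_of_pow_eq_one hcn))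

theorem mem_hypercenter_iff {g : G} :
    g ∈ hypercenter G ↔ ∃ n, g ∈ Subgroup.upperCentralSeries G n :=
  Subgroup.mem_iSup_of_directed (Subgroup.upperCentralSeries_mono G).directed_le

theorem IsPGroup.commute_of_mem_upperCentralSeries {p : ℕ} {P : Subgroup G} [P.Normal]
    (hP : IsPGroup p P) {x : G} (hx : (orderOf x).Coprime p) (n : ℕ) {g : G}
    (hgP : g ∈ P) (hgZ : g ∈ Subgroup.upperCentralSeries G n) : Commute x g := by
  induction n generalizing g with
  | zero =>
    rw [Subgroup.upperCentralSeries_zero, Subgroup.mem_bot] at hgZ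
    exact hgZ ▸ Commute.one_right x
  | succ n ih =>
    have hcP : ⁅x, g⁆ ∈ P := mul_mem (‹P.Normal›.conj_mem g hgP x) (inv_mem hgP)
    have hcZ : ⁅x, g⁆ ∈ Subgroup.upperCentralSeries G n :=
      commutatorElement_inv g x ▸ inv_mem (Subgroup.mem_upperCentralSeries_succ_iff.mp hgZ x)
    have hc : ⁅x, g⁆ ^ orderOf x = 1 := by
      rw [← commutatorElement_pow_left_of_commute (ih hcP hcZ), pow_orderOf_eq_one,
        commutatorElement_one_left]
    exact commutatorElement_eq_one_iff_commute.mp (hP.eq_one_of_pow_eq_one hcP hx hc)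

end

theorem pPrimeElements_centralize_hypercentral_pSubgroup_general {G : Type*} [Group G]
    (p : ℕ) (P : Subgroup G) [P.Normal]
    (hPp : IsPGroup p P) (hPZ : P ≤ hypercenter G) :
    Subgroup.closure {x : G | Nat.Coprime (orderOf x) p} ≤
      Subgroup.centralizer (P : Set G) := by
  rw [Subgroup.closure_le]
  intro x hx g hgP
  obtain ⟨n, hgZ⟩ := mem_hypercenter_iff.mp (hPZ hgP)
  exact (hPp.commute_of_mem_upperCentralSeries hx n hgP hgZ).symm.eq

theorem pPrimeElements_centralize_hypercentral_pSubgroup {G : Type*} [Group G]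
    [Finite G] (p : ℕ) (hp : p.Prime) (P : Subgroup G) [P.Normal]
    (hPp : IsPGroup p P) (hPZ : P ≤ hypercenter G) :
    Subgroup.closure {x : G | Nat.Coprime (orderOf x) p} ≤
      Subgroup.centralizer (P : Set G) :=
  pPrimeElements_centralize_hypercentral_pSubgroup_general p P hPp hPZ
end

section
/- Let P be a finite p-group and α a p'-automorphism of P (an automorphism of order coprime to p). If α centralizes Ω₂(P) (the subgroup generated by elements of order dividing p²), then α = 1. -/
/-! Induct on `|P|`, so that `α` is trivial on every proper `α`-invariant subgroup, and suppose
that `F = C_P(α)` is proper. Its normalizer is `α`-invariant and, by the normalizer condition,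
not contained in `F`; hence `F` is normal. If `C_P(F) < P`, then `C_P(F) ≤ F`, and `x⁻¹ α(x)`
lies in `C_P(F)` because `x` and `α(x)` conjugate `F` in the same way. If `C_P(F) = P`, then `F` is
central and contains the proper invariant subgroup `[P, P]`, so `P` has class at most `2`; by
induction on the order of `x`, `x^p` is fixed, and `α(x)^p = x^p` forces `(α(x) x⁻¹)^(p²) = 1`.
Either way `α(x) = z x` or `α(x) = x z` with `α(z) = z`, so `α^k(x)` is `z^k x` (resp. `x z^k`)
and `z^|α| = 1`; as `z` is a `p`-element and `|α|` is prime to `p`, `z = 1`.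
-/

open scoped commutatorElement

section CommuteCommutator

variable {G : Type*} [Group G] {u v c : G}

theorem pow_mul_eq_of_commute_commutator (hcv : Commute c v) (h : v * u = u * v * c) (n : ℕ) :
    v ^ n * u = u * v ^ n * c ^ n := by
  induction n with
  | zero => simp
  | succ n ih =>
    calc v ^ (n + 1) * u = v * (v ^ n * u) := by rw [pow_succ', mul_assoc]
      _ = v * u * v ^ n * c ^ n := by rw [ih]; group
      _ = u * v * v ^ n * c * c ^ n := by rw [h, mul_assoc (u * v), (hcv.pow_right n).eq]; group
      _ = u * v ^ (n + 1) * c ^ (n + 1) := by rw [pow_succ', pow_succ']; group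

theorem mul_pow_eq_of_commute_commutator (hcu : Commute c u) (hcv : Commute c v)
    (h : v * u = u * v * c) (n : ℕ) : (u * v) ^ n = u ^ n * v ^ n * c ^ n.choose 2 := by
  induction n with
  | zero => simp
  | succ n ih =>
    calc (u * v) ^ (n + 1) = u ^ n * (v ^ n * u) * v * c ^ n.choose 2 := by
          rw [pow_succ, ih, mul_assoc _ (c ^ _), ((hcu.mul_right hcv).pow_left _).eq]; group
      _ = u ^ n * u * v ^ n * c ^ n * v * c ^ n.choose 2 := by
          rw [pow_mul_eq_of_commute_commutator hcv h]; group
      _ = u ^ (n + 1) * v ^ (n + 1) * c ^ (n + 1).choose 2 := by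
          rw [mul_assoc _ (c ^ n) v, (hcv.pow_left n).eq, Nat.choose_succ_succ,
            Nat.choose_one_right, pow_add, pow_succ, pow_succ]; group

end CommuteCommutator

theorem mul_inv_pow_sq_eq_one_of_pow_eq {G : Type*} [Group G]
    (hG : ∀ a b g : G, Commute ⁅a, b⁆ g) {x y : G} {n : ℕ} (h : x ^ n = y ^ n) :
    (y * x⁻¹) ^ n ^ 2 = 1 := by
  set c := ⁅x, y⁻¹⁆
  have hrel : x⁻¹ * y = y * x⁻¹ * c := by simp only [c, commutatorElement_def]; group
  have hc : c ^ n = 1 := by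
    have hcomm : x⁻¹ ^ n * y = y * x⁻¹ ^ n := by
      rw [inv_pow, h, ← inv_pow]; exact ((Commute.refl y).inv_left.pow_left n).eq
    have := pow_mul_eq_of_commute_commutator (hG _ _ _) hrel n
    rw [hcomm] at this
    exact left_eq_mul.mp this
  calc (y * x⁻¹) ^ n ^ 2 = ((y * x⁻¹) ^ n) ^ n := by rw [sq, pow_mul]
    _ = (c ^ n) ^ n.choose 2 := by
      rw [mul_pow_eq_of_commute_commutator (hG _ _ _) (hG _ _ _) hrel, inv_pow, h,
        mul_inv_cancel, one_mul, ← pow_mul, mul_comm, pow_mul]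
    _ = 1 := by rw [hc, one_pow]

theorem Group.IsNilpotent.commutator_ne_top {G : Type*} [Group G] [Group.IsNilpotent G]
    [Nontrivial G] : commutator G ≠ ⊤ := by
  intro h
  have hlcs (n : ℕ) : (⊤ : Subgroup G).lowerCentralSeries n = ⊤ := by
    induction n with
    | zero => rfl
    | succ n ih => rw [Subgroup.lowerCentralSeries_succ, ih, ← commutator_def, h]
  obtain ⟨n, hn⟩ := Subgroup.nilpotent_iff_lowerCentralSeries.mp ‹_›
  exact bot_ne_top (hn ▸ hlcs n)

namespace MulAut

variable {G : Type*} [Group G] (α : MulAut G)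

def fixedSubgroup : Subgroup G := (α : G →* G).eqLocus (MonoidHom.id G)

variable {α}

theorem mem_fixedSubgroup {x : G} : x ∈ α.fixedSubgroup ↔ α x = x := Iff.rfl

theorem map_fixedSubgroup : α.fixedSubgroup.map α.toMonoidHom = α.fixedSubgroup := by
  ext x
  rw [Subgroup.mem_map_equiv, mem_fixedSubgroup, mem_fixedSubgroup, MulEquiv.apply_symm_apply,
    eq_comm, MulEquiv.symm_apply_eq]
  exact eq_comm

theorem map_normalizer_fixedSubgroup :
    (Subgroup.normalizer α.fixedSubgroup).map α.toMonoidHom =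
      Subgroup.normalizer α.fixedSubgroup := by
  rw [Subgroup.map_equiv_normalizer_eq, map_fixedSubgroup]

theorem map_centralizer_fixedSubgroup :
    (Subgroup.centralizer α.fixedSubgroup).map α.toMonoidHom =
      Subgroup.centralizer α.fixedSubgroup := by
  ext g
  simp only [Subgroup.mem_map_equiv, Subgroup.mem_centralizer_iff]
  refine forall₂_congr fun f hf => ?_
  have hf' : α.symm f = f := α.symm_apply_eq.mpr hf.symm
  refine ⟨fun h => α.symm.injective ?_, fun h => ?_⟩
  · rw [map_mul, map_mul, hf', h]
  · rw [← hf', ← map_mul, h, map_mul]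

theorem map_commutator : (commutator G).map α.toMonoidHom = commutator G :=
  Subgroup.characteristic_iff_map_eq.mp inferInstance α

variable (α) in
def restrict {H : Subgroup G} (hH : H.map α.toMonoidHom = H) : MulAut H :=
  (α.subgroupMap H).trans (MulEquiv.subgroupCongr hH)

theorem coe_restrict_pow_apply {H : Subgroup G} (hH : H.map α.toMonoidHom = H) (n : ℕ)
    (y : H) :
    ((α.restrict hH ^ n) y : G) = (α ^ n) y := by
  induction n with
  | zero => rfl
  | succ n ih => rw [pow_succ', pow_succ', mul_apply, mul_apply, ← ih]; rfl

theorem orderOf_restrict_dvd {H : Subgroup G} (hH : H.map α.toMonoidHom = H) :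
    orderOf (α.restrict hH) ∣ orderOf α :=
  orderOf_dvd_of_pow_eq_one <| MulEquiv.ext fun y =>
    Subtype.ext <| by rw [coe_restrict_pow_apply, pow_orderOf_eq_one]; rfl

theorem eq_one_of_apply_eq_mul {x z : G} (hcop : (orderOf α).Coprime (orderOf z))
    (hz : α z = z) (hx : α x = z * x) : z = 1 := by
  have hpow (j : ℕ) : (α ^ j) x = z ^ j * x := by
    induction j with
    | zero => simp
    | succ j ih =>
      rw [pow_succ', mul_apply, ih, map_mul, map_pow, hz, hx, ← mul_assoc, ← pow_succ]
  have hz1 : z ^ orderOf α = 1 := by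
    simpa [pow_orderOf_eq_one] using (hpow (orderOf α)).symm
  exact orderOf_eq_one_iff.mp (hcop.symm.eq_one_of_dvd (orderOf_dvd_of_pow_eq_one hz1))

variable {p : ℕ}

theorem apply_eq_self_of_apply_mul_inv_mem (hP : IsPGroup p G) (hcop : (orderOf α).Coprime p)
    {x : G} (hx : α x * x⁻¹ ∈ α.fixedSubgroup) : α x = x := by
  obtain ⟨k, hk⟩ := hP (α x * x⁻¹)
  rw [← mul_inv_eq_one]
  exact eq_one_of_apply_eq_mul (x := x)
    ((hcop.pow_right k).coprime_dvd_right (orderOf_dvd_of_pow_eq_one hk)) hx (by group)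

theorem apply_eq_self_of_inv_mul_apply_mem (hP : IsPGroup p G) (hcop : (orderOf α).Coprime p)
    {x : G} (hx : x⁻¹ * α x ∈ α.fixedSubgroup) : α x = x := by
  have : α x⁻¹ * x⁻¹⁻¹ ∈ α.fixedSubgroup := by
    simpa [mul_inv_rev] using inv_mem hx
  simpa using apply_eq_self_of_apply_mul_inv_mem hP hcop this

theorem fixedSubgroup_normal [Group.IsNilpotent G]
    (hind : ∀ H : Subgroup G, H ≠ ⊤ → H.map α.toMonoidHom = H → H ≤ α.fixedSubgroup) :
    α.fixedSubgroup.Normal := by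
  rw [← Subgroup.normalizer_eq_top_iff]
  by_contra hN
  have hF : α.fixedSubgroup ≠ ⊤ := by
    rintro hF
    exact hN (by rw [hF, Subgroup.normalizer_eq_top_iff]; infer_instance)
  exact (Group.normalizerCondition_of_isNilpotent _ hF.lt_top).not_ge
    (hind _ hN map_normalizer_fixedSubgroup)

theorem eq_one_of_centralizer_le (hP : IsPGroup p G) (hcop : (orderOf α).Coprime p)
    (hF : α.fixedSubgroup.Normal)
    (hC : Subgroup.centralizer α.fixedSubgroup ≤ α.fixedSubgroup) : α = 1 := by
  ext x
  refine apply_eq_self_of_inv_mul_apply_mem hP hcop (hC fun f hf => ?_)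
  -- `F` is normal and fixed pointwise, so `x` and `α x` induce the same conjugation on it.
  have hconj : α x * f * (α x)⁻¹ = x * f * x⁻¹ := by
    have := hF.conj_mem f hf x
    rwa [mem_fixedSubgroup, map_mul, map_mul, map_inv, mem_fixedSubgroup.mp hf] at this
  calc f * (x⁻¹ * α x) = x⁻¹ * (x * f * x⁻¹) * α x := by group
    _ = x⁻¹ * α x * f := by rw [← hconj]; group

theorem eq_one_of_commute_commutator (hG : ∀ a b g : G, Commute ⁅a, b⁆ g)
    (hP : IsPGroup p G) (hcop : (orderOf α).Coprime p)
    (hfix : ∀ x : G, x ^ p ^ 2 = 1 → α x = x) : α = 1 := by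
  have key (k : ℕ) : ∀ x : G, x ^ p ^ (k + 2) = 1 → α x = x := by
    induction k with
    | zero => exact hfix
    | succ k ih =>
      intro x hx
      have hxp : α (x ^ p) = x ^ p := ih _ (by rwa [← pow_mul, ← pow_succ'])
      exact apply_eq_self_of_apply_mul_inv_mem hP hcop
        (hfix _ (mul_inv_pow_sq_eq_one_of_pow_eq hG (by rw [← map_pow, hxp])))
  ext x
  obtain ⟨k, hk⟩ := hP x
  exact key k x (by rw [pow_add, pow_mul, hk, one_pow])

theorem eq_one_of_forall_invariant_ne_top [Finite G] [Fact p.Prime] (hP : IsPGroup p G)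
    (hcop : (orderOf α).Coprime p)
    (hfix : ∀ x : G, x ^ p ^ 2 = 1 → α x = x)
    (hind : ∀ H : Subgroup G, H ≠ ⊤ → H.map α.toMonoidHom = H → H ≤ α.fixedSubgroup) :
    α = 1 := by
  have := hP.isNilpotent
  by_cases hF : α.fixedSubgroup = ⊤
  · ext x
    exact mem_fixedSubgroup.mp (hF ▸ Subgroup.mem_top x)
  by_cases hC : Subgroup.centralizer (α.fixedSubgroup : Set G) = ⊤
  · obtain ⟨x, -, hx⟩ := SetLike.exists_of_lt (Ne.lt_top hF)
    have : Nontrivial G := nontrivial_of_ne x 1 fun h => hx (h ▸ α.fixedSubgroup.one_mem)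
    have hD := hind _ Group.IsNilpotent.commutator_ne_top map_commutator
    refine eq_one_of_commute_commutator (fun a b g => ?_) hP hcop hfix
    have hab : ⁅a, b⁆ ∈ commutator G :=
      Subgroup.commutator_mem_commutator (Subgroup.mem_top a) (Subgroup.mem_top b)
    exact (Subgroup.mem_center_iff.mp
      (Subgroup.centralizer_eq_top_iff_subset.mp hC (hD hab)) g).symm
  · exact eq_one_of_centralizer_le hP hcop (fixedSubgroup_normal hind)
      (hind _ hC map_centralizer_fixedSubgroup)

end MulAut

theorem pPrimeAut_trivial_of_fixes_omega2 {P : Type*} [Group P] [Finite P] (p : ℕ)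
    (hp : p.Prime) (hP : IsPGroup p P) (α : MulAut P)
    (hcop : Nat.Coprime (orderOf α) p)
    (hfix : ∀ x : P, x ^ (p ^ 2) = 1 → α x = x) :
    α = 1 := by
  have := Fact.mk hp
  induction h : Nat.card P using Nat.strong_induction_on generalizing P with
  | _ n ih =>
  refine α.eq_one_of_forall_invariant_ne_top hP hcop hfix fun H hH hαH y hy => ?_
  have hcard : Nat.card H < n :=
    h ▸ H.card_le_card_group.lt_of_ne fun hc => hH (H.eq_top_of_card_eq hc)
  have hres := ih _ hcard (hP.to_subgroup H) (α.restrict hαH)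
    (hcop.coprime_dvd_left (α.orderOf_restrict_dvd hαH))
    (fun z hz => Subtype.ext (hfix z (by simpa using congrArg Subtype.val hz))) rfl
  exact congrArg (fun β : MulAut H => (β ⟨y, hy⟩ : P)) hres
end

section
/- Every weakly H-subgroup of a finite group G is an HC-subgroup of G. That is, if there exists a normal subgroup T of G with G = HT and H ∩ T an H-subgroup of G, then there exists a normal subgroup T' of G with G = HT' and H^g ∩ N_{T'}(H) ≤ H for all g ∈ G. -/
/-- H is a weakly H-subgroup of G if there is a normal subgroup T of G with
G = HT and H ∩ T an H-subgroup of G. -/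
def IsWeaklyHSubgroup {G : Type*} [Group G] (H : Subgroup G) : Prop :=
  ∃ T : Subgroup G, T.Normal ∧ H ⊔ T = ⊤ ∧ IsHSubgroup (H ⊓ T)

namespace Subgroup

variable {G : Type*} [Group G] {H T : Subgroup G} [T.Normal]

theorem map_conj_inf_normal (g : G) :
    (H ⊓ T).map (MulAut.conj g).toMonoidHom = H.map (MulAut.conj g).toMonoidHom ⊓ T := by
  rw [map_inf _ _ _ (MulAut.conj g).injective]
  exact congrArg (_ ⊓ ·) (Normal.map_conj_eq T g)

theorem normalizer_le_normalizer_inf_normal :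
    normalizer (H : Set G) ≤ normalizer ((H ⊓ T :) : Set G) := by
  simpa only [normalizer_eq_top, inf_top_eq] using inf_normalizer_le_normalizer_inf (H := H) (K := T)

theorem map_conj_inf_normal_inf_normalizer_le (hH : IsHSubgroup (H ⊓ T)) (g : G) :
    H.map (MulAut.conj g).toMonoidHom ⊓ (T ⊓ normalizer (H : Set G)) ≤ H :=
  calc H.map (MulAut.conj g).toMonoidHom ⊓ (T ⊓ normalizer (H : Set G))
      = (H ⊓ T).map (MulAut.conj g).toMonoidHom ⊓ normalizer (H : Set G) := by
        rw [map_conj_inf_normal, inf_assoc]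
    _ ≤ (H ⊓ T).map (MulAut.conj g).toMonoidHom ⊓ normalizer ((H ⊓ T :) : Set G) :=
        inf_le_inf_left _ normalizer_le_normalizer_inf_normal
    _ ≤ H := (hH g).trans inf_le_left

end Subgroup

theorem weaklyH_isHC_general {G : Type*} [Group G] (H : Subgroup G)
    (h : IsWeaklyHSubgroup H) : IsHCSubgroup H := by
  obtain ⟨T, hT, hHT, hH⟩ := h
  exact ⟨T, hT, hHT, Subgroup.map_conj_inf_normal_inf_normalizer_le hH⟩

theorem weaklyH_isHC {G : Type*} [Group G] [Finite G] (H : Subgroup G)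
    (h : IsWeaklyHSubgroup H) : IsHCSubgroup H :=
  weaklyH_isHC_general H h
end
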